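/- Let n ≥ 1, m ∈ ℕ, and let (p_k, q_k) ∈ {1,…,n}² for k = 1,…,m be clause pairs such that every element of {1,…,n} occurs as p_k or q_k for some k. Consider the boolean dynamical system on the vertex set {0, 1,…,n, n+1} with f_i(x) = x(i) for 0 ≤ i ≤ n, and f_{n+1}(x) defined by cases on (x(0), x(n+1)): it equals ⋀_{k=1}^m (x(p_k) ∧ x(q_k)) if (x(0), x(n+1)) = (false, false); ⋀_{k=1}^m (x(p_k) ∨ x(q_k)) if (false, true); ⋁_{k=1}^m (x(p_k) ∧ x(q_k)) if (true, false); and ⋁_{k=1}^m (x(p_k) ∨ x(q_k)) if (true, true). The number of fixed points of this system equals 2·#sat + 2^{n+1} − 2, where #sat is the number of assignments y : {1,…,n} → Bool with y(p_k) ∨ y(q_k) = true for all k. -/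

import Mathlib

/-!
Every vertex but `n+1` is fixed by its identity rule, so a fixed point is a choice of
`(x 0, x (n+1))` and an assignment `y` of the variables solving the equation at `n+1`.
Since every variable occurs in a clause, `(false, false)` admits every `y` except the all-true
one and `(true, true)` every `y` except the all-false one, `2 ^ n - 1` each; `(false, true)`
admits exactly the satisfying assignments and, by De Morgan, `(true, false)` exactly the
negations of satisfying assignments.
-/

/-- The boolean dynamical system of the `D₂`-reduction on the vertex set
`{0} ⊕ {1,…,n} ⊕ {n+1}`: vertex `0` (`Sum.inl ()`) and the variable vertices
(`Sum.inr (Sum.inl i)`) carry the identity, and vertex `n+1` (`Sum.inr (Sum.inr ())`)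
carries the function defined by cases on `(x 0, x (n+1))`:
`⋀_k (x p_k ∧ x q_k)` on `(false, false)`, `⋀_k (x p_k ∨ x q_k)` on `(false, true)`,
`⋁_k (x p_k ∧ x q_k)` on `(true, false)`, and `⋁_k (x p_k ∨ x q_k)` on `(true, true)`. -/
noncomputable def sys18 (n m : ℕ) (p q : Fin m → Fin n) (v : Unit ⊕ Fin n ⊕ Unit)
    (x : Unit ⊕ Fin n ⊕ Unit → Bool) : Bool :=
  match v with
  | Sum.inl _ => x (Sum.inl ())
  | Sum.inr (Sum.inl i) => x (Sum.inr (Sum.inl i))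
  | Sum.inr (Sum.inr _) =>
      let y : Fin n → Bool := fun i => x (Sum.inr (Sum.inl i))
      match x (Sum.inl ()), x (Sum.inr (Sum.inr ())) with
      | false, false => Finset.univ.inf fun k : Fin m => y (p k) && y (q k)
      | false, true  => Finset.univ.inf fun k : Fin m => y (p k) || y (q k)
      | true,  false => Finset.univ.sup fun k : Fin m => y (p k) && y (q k)
      | true,  true  => Finset.univ.sup fun k : Fin m => y (p k) || y (q k)

theorem Bool.finset_inf_eq_true_iff {β : Type*} (s : Finset β) (f : β → Bool) :
    s.inf f = true ↔ ∀ k ∈ s, f k = true :=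
  Finset.inf_eq_top_iff f s

theorem Bool.finset_sup_eq_false_iff {β : Type*} (s : Finset β) (f : β → Bool) :
    s.sup f = false ↔ ∀ k ∈ s, f k = false :=
  Finset.sup_eq_bot_iff f s

section Clauses

variable {ι α : Type*} [Fintype ι] (p q : ι → α)

theorem inf_and_eq_true_iff (hocc : ∀ i, ∃ k, p k = i ∨ q k = i) (y : α → Bool) :
    (Finset.univ.inf fun k => y (p k) && y (q k)) = true ↔ y = fun _ => true := by
  simp only [Bool.finset_inf_eq_true_iff, Finset.mem_univ, true_implies, Bool.and_eq_true]
  refine ⟨fun h => funext fun i => ?_, by rintro rfl; simp⟩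
  obtain ⟨k, rfl | rfl⟩ := hocc i
  exacts [(h k).1, (h k).2]

theorem sup_or_eq_false_iff (hocc : ∀ i, ∃ k, p k = i ∨ q k = i) (y : α → Bool) :
    (Finset.univ.sup fun k => y (p k) || y (q k)) = false ↔ y = fun _ => false := by
  simp only [Bool.finset_sup_eq_false_iff, Finset.mem_univ, true_implies, Bool.or_eq_false_iff]
  refine ⟨fun h => funext fun i => ?_, by rintro rfl; simp⟩
  obtain ⟨k, rfl | rfl⟩ := hocc i
  exacts [(h k).1, (h k).2]

theorem inf_or_eq_true_iff (y : α → Bool) :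
    (Finset.univ.inf fun k => y (p k) || y (q k)) = true ↔ ∀ k, (y (p k) || y (q k)) = true := by
  simp only [Bool.finset_inf_eq_true_iff, Finset.mem_univ, true_implies]

theorem sup_and_eq_false_iff (y : α → Bool) :
    (Finset.univ.sup fun k => y (p k) && y (q k)) = false ↔
      ∀ k, ((!y (p k)) || (!y (q k))) = true := by
  simp only [Bool.finset_sup_eq_false_iff, Finset.mem_univ, true_implies, Bool.and_eq_false_iff,
    Bool.or_eq_true, Bool.not_eq_eq_eq_not, Bool.not_true]

def negSatEquiv :
    {y : α → Bool // ∀ k, ((!y (p k)) || (!y (q k))) = true} ≃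
      {y : α → Bool // ∀ k, (y (p k) || y (q k)) = true} :=
  (Equiv.arrowCongr (Equiv.refl α) Equiv.boolNot).subtypeEquiv fun _ => by simp

end Clauses

section FixedPoints

variable {n m : ℕ} (p q : Fin m → Fin n)

/-- The local function of vertex `n+1` in `sys18`, in terms of `x 0`, `x (n+1)` and `x|_{1..n}`. -/
noncomputable def lastRule (a b : Bool) (y : Fin n → Bool) : Bool :=
  match a, b with
  | false, false => Finset.univ.inf fun k : Fin m => y (p k) && y (q k)
  | false, true  => Finset.univ.inf fun k : Fin m => y (p k) || y (q k)
  | true,  false => Finset.univ.sup fun k : Fin m => y (p k) && y (q k)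
  | true,  true  => Finset.univ.sup fun k : Fin m => y (p k) || y (q k)

theorem sys18_fixed_iff (x : Unit ⊕ Fin n ⊕ Unit → Bool) :
    (∀ v, sys18 n m p q v x = x v) ↔
      lastRule p q (x (Sum.inl ())) (x (Sum.inr (Sum.inr ()))) (fun i => x (Sum.inr (Sum.inl i))) =
        x (Sum.inr (Sum.inr ())) := by
  refine ⟨fun h => h (Sum.inr (Sum.inr ())), ?_⟩
  rintro h (_ | _ | _)
  exacts [rfl, rfl, h]

def sys18FixedEquiv :
    {x : Unit ⊕ Fin n ⊕ Unit → Bool // ∀ v, sys18 n m p q v x = x v} ≃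
      Σ ab : Bool × Bool, {y : Fin n → Bool // lastRule p q ab.1 ab.2 y = ab.2} where
  toFun x := ⟨(x.1 (Sum.inl ()), x.1 (Sum.inr (Sum.inr ()))),
    fun i => x.1 (Sum.inr (Sum.inl i)), (sys18_fixed_iff p q x.1).mp x.2⟩
  invFun t := ⟨Sum.elim (fun _ => t.1.1) (Sum.elim t.2.1 fun _ => t.1.2),
    (sys18_fixed_iff p q _).mpr t.2.2⟩
  left_inv _ := Subtype.ext <| funext fun
    | Sum.inl () | Sum.inr (Sum.inl _) | Sum.inr (Sum.inr ()) => rfl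
  right_inv _ := rfl

theorem card_lastRule_false_false (hocc : ∀ i, ∃ k, p k = i ∨ q k = i) :
    Fintype.card {y : Fin n → Bool // lastRule p q false false y = false} = 2 ^ n - 1 := by
  have e : {y : Fin n → Bool // lastRule p q false false y = false} ≃
      {y : Fin n → Bool // ¬y = fun _ => true} :=
    Equiv.subtypeEquivRight fun y => by
      rw [← inf_and_eq_true_iff p q hocc y, Bool.not_eq_true]
      rfl
  rw [Fintype.card_congr e, Fintype.card_subtype_compl, Fintype.card_subtype_eq]
  simp

theorem card_lastRule_false_true :
    Fintype.card {y : Fin n → Bool // lastRule p q false true y = true} =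
      Fintype.card {y : Fin n → Bool // ∀ k, (y (p k) || y (q k)) = true} :=
  Fintype.card_congr <| Equiv.subtypeEquivRight fun y => inf_or_eq_true_iff p q y

theorem card_lastRule_true_false :
    Fintype.card {y : Fin n → Bool // lastRule p q true false y = false} =
      Fintype.card {y : Fin n → Bool // ∀ k, (y (p k) || y (q k)) = true} :=
  Fintype.card_congr <|
    (Equiv.subtypeEquivRight fun y => sup_and_eq_false_iff p q y).trans (negSatEquiv p q)

theorem card_lastRule_true_true (hocc : ∀ i, ∃ k, p k = i ∨ q k = i) :
    Fintype.card {y : Fin n → Bool // lastRule p q true true y = true} = 2 ^ n - 1 := by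
  have e : {y : Fin n → Bool // lastRule p q true true y = true} ≃
      {y : Fin n → Bool // ¬y = fun _ => false} :=
    Equiv.subtypeEquivRight fun y => by
      rw [← sup_or_eq_false_iff p q hocc y, Bool.not_eq_false]
      rfl
  rw [Fintype.card_congr e, Fintype.card_subtype_compl, Fintype.card_subtype_eq]
  simp

end FixedPoints

theorem stmt18_general (n m : ℕ) (p q : Fin m → Fin n)
    (hocc : ∀ i : Fin n, ∃ k : Fin m, p k = i ∨ q k = i) :
    Fintype.card {x : Unit ⊕ Fin n ⊕ Unit → Bool // ∀ v, sys18 n m p q v x = x v} =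
    2 * Fintype.card {y : Fin n → Bool // ∀ k, (y (p k) || y (q k)) = true} +
      2 ^ (n + 1) - 2 := by
  rw [Fintype.card_congr (sys18FixedEquiv p q), Fintype.card_sigma]
  simp only [Fintype.sum_prod_type, Fintype.sum_bool]
  rw [card_lastRule_false_false p q hocc, card_lastRule_false_true, card_lastRule_true_false,
    card_lastRule_true_true p q hocc, pow_succ]
  have := Nat.one_le_two_pow (n := n)
  omega

/-- If `n ≥ 1` and every variable occurs in some clause, the number of fixed points of the
system `sys18` equals `2 ⋅ #sat + 2 ^ (n + 1) − 2`, where `#sat` is the number of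
satisfying assignments of the positive 2-CNF `⋀_k (x_{p_k} ∨ x_{q_k})`. -/
theorem stmt18 (n m : ℕ) (hn : 1 ≤ n) (p q : Fin m → Fin n)
    (hocc : ∀ i : Fin n, ∃ k : Fin m, p k = i ∨ q k = i) :
    Fintype.card {x : Unit ⊕ Fin n ⊕ Unit → Bool // ∀ v, sys18 n m p q v x = x v} =
    2 * Fintype.card {y : Fin n → Bool // ∀ k, (y (p k) || y (q k)) = true} +
      2 ^ (n + 1) - 2 :=
  stmt18_general n m p q hocc
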